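/- Suppose every decided command c is assigned a unique timestamp T(c) and a predecessor set Pred(c) with the property that conflicting decided commands with smaller timestamps are in Pred(c), and each node delivers decided commands in any order consistent with the acyclic pruned dependency graph (edges from c̄ to c when c̄ ∈ Pred(c) and T(c̄) < T(c)). Then the delivery sequences of any two nodes that deliver the same finite set of commands are equivalent up to permutation of non-conflicting commands. -/

import Mathlib

/-- One adjacent swap of two non-conflicting (commutative) commands. -/
def SwapAdj {Cmd : Type} (conflict : Cmd → Cmd → Prop) (l1 l2 : List Cmd) : Prop :=
  ∃ (a b : Cmd) (p q : List Cmd), ¬ conflict a b ∧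
    l1 = p ++ a :: b :: q ∧ l2 = p ++ b :: a :: q

section Aux

variable {Cmd : Type} (conflict : Cmd → Cmd → Prop)

lemma swapAdj_cons {x : Cmd} {l1 l2 : List Cmd} (h : SwapAdj conflict l1 l2) :
    SwapAdj conflict (x :: l1) (x :: l2) := by
  obtain ⟨a, b, p, q, h1, h2, h3⟩ := h
  exact ⟨a, b, x :: p, q, h1, by simp [h2], by simp [h3]⟩

lemma eqv_cons (x : Cmd) {l1 l2 : List Cmd}
    (h : Relation.EqvGen (SwapAdj conflict) l1 l2) :
    Relation.EqvGen (SwapAdj conflict) (x :: l1) (x :: l2) := by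
  induction h with
  | rel _ _ h => exact .rel _ _ (swapAdj_cons conflict h)
  | refl _ => exact .refl _
  | symm _ _ _ ih => exact .symm _ _ ih
  | trans _ _ _ _ _ ih1 ih2 => exact .trans _ _ _ ih1 ih2

lemma eqv_move_front (h : Cmd) (p q : List Cmd) (hp : ∀ a ∈ p, ¬ conflict a h) :
    Relation.EqvGen (SwapAdj conflict) (p ++ h :: q) (h :: (p ++ q)) := by
  induction p with
  | nil => exact Relation.EqvGen.refl _
  | cons x p ih =>
    refine .trans _ _ _ (eqv_cons conflict x (ih (fun a ha => hp a (.tail _ ha)))) ?_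
    exact .rel _ _ ⟨x, h, [], p ++ q, fun hc => hp x (.head _) hc, rfl, rfl⟩

lemma sublist_indexOf [DecidableEq Cmd] {l : List Cmd} {a b : Cmd} (hn : l.Nodup)
    (hs : [a, b].Sublist l) : l.idxOf a < l.idxOf b := by
  induction l with
  | nil => simp at hs
  | cons x l ih =>
    obtain ⟨hx, hn⟩ := List.nodup_cons.mp hn
    cases hs with
    | cons _ hs =>
      have ha : a ∈ l := (hs.subset (by simp))
      have hb : b ∈ l := (hs.subset (by simp))
      have hax : x ≠ a := fun h => hx (h ▸ ha)
      have hbx : x ≠ b := fun h => hx (h ▸ hb)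
      rw [List.idxOf_cons_ne _ hax, List.idxOf_cons_ne _ hbx]
      exact Nat.succ_lt_succ (ih hn hs)
    | cons_cons _ hs =>
      have hb : b ∈ l := (hs.subset (by simp))
      have hbx : a ≠ b := fun h => hx (h ▸ hb)
      rw [List.idxOf_cons_self, List.idxOf_cons_ne _ hbx]
      exact Nat.succ_pos _

lemma indexOf_sublist [DecidableEq Cmd] {l : List Cmd} {a b : Cmd} (hn : l.Nodup)
    (ha : a ∈ l) (hb : b ∈ l) (hlt : l.idxOf a < l.idxOf b) :
    [a, b].Sublist l := by
  induction l with
  | nil => simp at ha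
  | cons x l ih =>
    obtain ⟨hx, hn⟩ := List.nodup_cons.mp hn
    by_cases hax : a = x
    · subst hax
      have hba : b ≠ a := by
        intro h; subst h; simp at hlt
      have hb' : b ∈ l := by
        rcases List.mem_cons.mp hb with h | h
        · exact absurd h hba
        · exact h
      exact List.Sublist.cons₂ a (List.singleton_sublist.mpr hb')
    · have hbx : b ≠ x := by
        intro h; subst h
        rw [List.idxOf_cons_self] at hlt; omega
      have ha' : a ∈ l := by rcases List.mem_cons.mp ha with h | h; exact absurd h hax; exact h
      have hb' : b ∈ l := by rcases List.mem_cons.mp hb with h | h; exact absurd h hbx; exact h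
      rw [List.idxOf_cons_ne _ (Ne.symm hax), List.idxOf_cons_ne _ (Ne.symm hbx)] at hlt
      exact (ih hn ha' hb' (Nat.lt_of_succ_lt_succ hlt)).cons x

lemma eqv_of_sublist_cond : ∀ (l2 l1 : List Cmd), l1.Perm l2 → l1.Nodup →
    (∀ a b, conflict a b → [a, b].Sublist l1 → [a, b].Sublist l2) →
    Relation.EqvGen (SwapAdj conflict) l1 l2 := by
  intro l2
  induction l2 with
  | nil =>
    intro l1 hperm _ _
    rw [List.perm_nil.mp hperm]
    exact .refl _
  | cons h t ih =>
    intro l1 hperm hnd hsub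
    have hmem : h ∈ l1 := hperm.mem_iff.mpr (by simp)
    obtain ⟨p, q, rfl⟩ := List.append_of_mem hmem
    have hndl2 : (h :: t).Nodup := hperm.nodup hnd
    have hht : h ∉ t := by simp at hndl2; exact hndl2.1
    have hhp : h ∉ p := by
      intro hc
      exact (List.nodup_append'.mp hnd).2.2 hc (by simp)
    have hp : ∀ a ∈ p, ¬ conflict a h := by
      intro a ha hc
      have hah : a ≠ h := fun he => hhp (he ▸ ha)
      have hs : [a, h].Sublist (p ++ h :: q) := by
        have h1 : [a].Sublist p := List.singleton_sublist.mpr ha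
        simpa using h1.append (List.singleton_sublist.mpr (List.mem_cons_self (a := h) (l := q)))
      have hs2 := hsub a h hc hs
      cases hs2 with
      | cons _ hs3 => exact hht (hs3.subset (by simp))
      | cons_cons _ _ => exact hah rfl
    have e1 : Relation.EqvGen (SwapAdj conflict) (p ++ h :: q) (h :: (p ++ q)) :=
      eqv_move_front conflict h p q hp
    have hperm2 : (p ++ q).Perm t := by
      have h1 : (h :: (p ++ q)).Perm (p ++ h :: q) := (List.perm_middle).symm
      exact (List.perm_cons h).mp (h1.trans hperm)
    have hnd2 : (p ++ q).Nodup := (List.nodup_cons.mp (List.nodup_middle.mp hnd)).2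
    have hsub2 : ∀ a b, conflict a b → [a, b].Sublist (p ++ q) → [a, b].Sublist t := by
      intro a b hc hs
      have hpq : (p ++ q).Sublist (p ++ h :: q) := by
        exact List.Sublist.append (List.Sublist.refl p) (List.sublist_cons_self h q)
      have hs' : [a, b].Sublist (p ++ h :: q) := hs.trans hpq
      have hs2 := hsub a b hc hs'
      have hah : a ≠ h := by
        intro he; subst he
        exact (List.nodup_cons.mp (List.nodup_middle.mp hnd)).1 (hs.subset (by simp))
      cases hs2 with
      | cons _ hs3 => exact hs3
      | cons_cons _ _ => exact absurd rfl hah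
    exact .trans _ _ _ e1 (eqv_cons conflict h (ih (p ++ q) hperm2 hnd2 hsub2))

end Aux

/-- Two nodes' delivery sequences of the same set of commands, each a
topological order of the pruned dependency DAG, are equivalent up to
permutation of non-conflicting commands. -/
theorem stmt_18 {Cmd β : Type} [DecidableEq Cmd] [LinearOrder β]
    (conflict : Cmd → Cmd → Prop)
    (hsymm : ∀ a b, conflict a b → conflict b a)
    (hirr : ∀ a, ¬ conflict a a)
    (T : Cmd → β) (Pred : Cmd → Set Cmd)
    (decided : Cmd → Prop)
    (hinj : ∀ a b, decided a → decided b → T a = T b → a = b)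
    (hpred : ∀ c c', decided c → decided c' → conflict c c' → T c' < T c → c' ∈ Pred c)
    (l1 l2 : List Cmd)
    (hdec : ∀ c ∈ l1, decided c)
    (hnodup : l1.Nodup)
    (hperm : l1.Perm l2)
    -- downward closure of the delivered set under the pruned dependency relation
    (hclosed : ∀ c ∈ l1, ∀ c', c' ∈ Pred c → T c' < T c → decided c' → c' ∈ l1)
    -- each list is a topological order of the pruned dependency DAG
    (htopo1 : ∀ a b, a ∈ l1 → b ∈ l1 → a ∈ Pred b → T a < T b →
      l1.idxOf a < l1.idxOf b)
    (htopo2 : ∀ a b, a ∈ l2 → b ∈ l2 → a ∈ Pred b → T a < T b →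
      l2.idxOf a < l2.idxOf b) :
    Relation.EqvGen (SwapAdj conflict) l1 l2 := by
  apply eqv_of_sublist_cond conflict l2 l1 hperm hnodup
  intro a b hc hs
  have ha1 : a ∈ l1 := hs.subset (by simp)
  have hb1 : b ∈ l1 := hs.subset (by simp)
  have hab : a ≠ b := by
    intro h; subst h; exact hirr a hc
  have hda := hdec a ha1
  have hdb := hdec b hb1
  have hTab : T a ≠ T b := fun h => hab (hinj a b hda hdb h)
  rcases lt_or_gt_of_ne hTab with hlt | hgt
  · have hpredab : a ∈ Pred b := hpred b a hdb hda (hsymm a b hc) hlt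
    have := htopo2 a b (hperm.mem_iff.mp ha1) (hperm.mem_iff.mp hb1) hpredab hlt
    exact indexOf_sublist (hperm.nodup hnodup) (hperm.mem_iff.mp ha1)
      (hperm.mem_iff.mp hb1) this
  · have hpredba : b ∈ Pred a := hpred a b hda hdb hc hgt
    have h1 := htopo1 b a hb1 ha1 hpredba hgt
    have h2 := sublist_indexOf hnodup hs
    omega
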